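/- Let G be a cycle graph on n vertices (n ≥ 3) and H also a cycle on n vertices. Then H has a minor-embedding into G with all chains singletons, and conversely, if a graph G on n vertices admits a minor-embedding of the n-cycle Cₙ, then (since chains are nonempty and pairwise disjoint, each chain must be a singleton) G contains a Hamiltonian cycle. -/

import Mathlib

open Finset

/-- A minor-embedding of `H` into `G`: nonempty connected pairwise-disjoint chains,
with every edge of `H` represented by an edge of `G` between the corresponding chains. -/
def IsMinorEmbedding {V W : Type*} (H : SimpleGraph V) (G : SimpleGraph W)
    (φ : V → Finset W) : Prop :=
  (∀ v, (φ v).Nonempty) ∧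
  (∀ v, (G.induce ((φ v : Set W))).Connected) ∧
  (∀ u v, H.Adj u v → ∃ u' ∈ φ u, ∃ v' ∈ φ v, G.Adj u' v') ∧
  (∀ u v : V, u ≠ v → Disjoint (φ u) (φ v))

/-!
Since the chains are nonempty and pairwise disjoint, their sizes add up to at most `|V(G)| = n`
while each is at least one, so every chain is a singleton. The chains then read off an injective,
hence bijective, graph homomorphism `Cₙ →g G`, which carries the standard Hamiltonian cycle of
`Cₙ` to one of `G`.
-/

open SimpleGraph

theorem SimpleGraph.cycleGraph.isHamiltonianCycle_cycle (n : ℕ) :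
    (cycleGraph.cycle n).IsHamiltonianCycle :=
  Walk.isHamiltonianCycle_iff_isCycle_and_length_eq.mpr ⟨cycleGraph.isCycle_cycle, by simp⟩

theorem SimpleGraph.connected_induce_singleton {W : Type*} (G : SimpleGraph W) (w : W) :
    (G.induce {w}).Connected := by
  rw [induce_singleton_eq_top]
  exact connected_top

section
variable {V W : Type*} {H : SimpleGraph V} {G : SimpleGraph W}

theorem isMinorEmbedding_singleton_iff {f : V → W} :
    IsMinorEmbedding H G (fun v => {f v}) ↔
      Function.Injective f ∧ ∀ u v, H.Adj u v → G.Adj (f u) (f v) := by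
  constructor
  · rintro ⟨-, -, hadj, hdisj⟩
    refine ⟨fun u v h => ?_, fun u v h => by simpa using hadj u v h⟩
    by_contra huv
    exact disjoint_singleton.mp (hdisj u v huv) h
  · rintro ⟨hinj, hadj⟩
    refine ⟨fun v => singleton_nonempty _, fun v => ?_,
      fun u v h => ⟨f u, mem_singleton_self _, f v, mem_singleton_self _, hadj u v h⟩,
      fun u v huv => disjoint_singleton.mpr (hinj.ne huv)⟩
    rw [coe_singleton]
    exact G.connected_induce_singleton (f v)

namespace IsMinorEmbedding

variable {φ : V → Finset W}

theorem card_eq_one [Fintype V] [Fintype W] (hφ : IsMinorEmbedding H G φ)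
    (hcard : Fintype.card W ≤ Fintype.card V) (v : V) : #(φ v) = 1 := by
  classical
  obtain ⟨hne, -, -, hdisj⟩ := hφ
  by_contra hv
  have hsum : ∑ u, #(φ u) ≤ Fintype.card W := by
    rw [← card_biUnion fun u _ w _ huw => hdisj u w huw]
    exact card_le_univ _
  have : Fintype.card V < ∑ u, #(φ u) := by
    rw [← card_univ, card_eq_sum_ones]
    exact sum_lt_sum (fun u _ => (hne u).card_pos)
      ⟨v, mem_univ v, lt_of_le_of_ne (hne v).card_pos (Ne.symm hv)⟩
  omega

theorem exists_bijective_hom [Fintype V] [Fintype W] (hφ : IsMinorEmbedding H G φ)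
    (hcard : Fintype.card W = Fintype.card V) : ∃ f : H →g G, Function.Bijective f := by
  choose f hf using fun v => Finset.card_eq_one.mp (hφ.card_eq_one hcard.le v)
  obtain ⟨hinj, hadj⟩ := isMinorEmbedding_singleton_iff.mp (funext hf ▸ hφ)
  exact ⟨⟨f, hadj _ _⟩, (Fintype.bijective_iff_injective_and_card f).mpr ⟨hinj, hcard.symm⟩⟩

end IsMinorEmbedding
end

/-- The `n`-cycle minor-embeds into itself by singleton chains, and conversely a graph `G`
on `n` vertices admitting a minor-embedding of the `n`-cycle contains a Hamiltonian cycle. -/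
theorem cycle_embedding_iff_hamiltonian {V : Type*} [Fintype V] [DecidableEq V]
    (n : ℕ) (hn : 3 ≤ n) (G : SimpleGraph V) (hcard : Fintype.card V = n) :
    (IsMinorEmbedding (SimpleGraph.cycleGraph n) (SimpleGraph.cycleGraph n)
      (fun i => {i})) ∧
    ((∃ φ : Fin n → Finset V,
        IsMinorEmbedding (SimpleGraph.cycleGraph n) G φ) →
      (∀ φ : Fin n → Finset V,
        IsMinorEmbedding (SimpleGraph.cycleGraph n) G φ → ∀ i, (φ i).card = 1) ∧
      ∃ (a : V) (p : G.Walk a a), p.IsHamiltonianCycle) := by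
  have hcard' : Fintype.card V = Fintype.card (Fin n) := by simp [hcard]
  refine ⟨isMinorEmbedding_singleton_iff (f := id).mpr ⟨Function.injective_id, fun _ _ => id⟩,
    fun ⟨φ, hφ⟩ => ⟨fun ψ hψ => hψ.card_eq_one hcard'.le, ?_⟩⟩
  obtain ⟨f, hf⟩ := hφ.exists_bijective_hom hcard'
  obtain ⟨k, rfl⟩ := Nat.exists_eq_add_of_le' hn
  exact ⟨f 0, (cycleGraph.cycle k).map f, (cycleGraph.isHamiltonianCycle_cycle k).map hf⟩
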